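/- Vanishing first-step gradient for the relation head on ICL sequences: Let the relation head carry the PT-construction value weights W_OV^rel = Σ_{l=1}^L (Σ_{u∈U_l} E(u)) E(r_l)^T. For any ICL sequence X (which contains no relation tokens) and any target y, the per-position values r_j^rel = u^T W_OV^rel x_j vanish for every position j (where u = Σ_v π_v E(v) - E(y)); consequently the gradient of the last-token cross-entropy loss with respect to W_KQ^rel, namely Σ_j α_j^rel (r_j^rel - r̄^rel)(x_j + p_j)E([sep])^T, is identically zero. -/
import Mathlib


open Filter Topology Finset Matrix

namespace CR

/-- Vocabulary tokens: `M` subjects, `L` attribute types each with `U` values,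
`G` grammar tokens, `L` relation tokens, and a separator. -/
inductive Tok (M L U G : ℕ) : Type where
  | subj : Fin M → Tok M L U G
  | attr : Fin L → Fin U → Tok M L U G
  | gram : Fin G → Tok M L U G
  | rel  : Fin L → Tok M L U G
  | sep  : Tok M L U G
deriving DecidableEq, Fintype

/-- Embedding dimension: one coordinate per vocabulary token plus `P` positional coordinates. -/
abbrev Dim (M L U G P : ℕ) := Tok M L U G ⊕ Fin P

abbrev Vec (M L U G P : ℕ) := Dim M L U G P → ℝ

variable {M L U G P : ℕ}

/-- One-hot token embedding `E(v)`. -/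
def E (v : Tok M L U G) : Vec M L U G P :=
  fun i => if i = Sum.inl v then 1 else 0

/-- One-hot positional encoding for relative position `-k`
(`pos 0 = E(p₀)`, `pos 1 = E(p₋₁)`, ...); zero if `k ≥ P`. -/
def pos (k : ℕ) : Vec M L U G P :=
  fun i => match i with
  | Sum.inl _ => 0
  | Sum.inr j => if (j : ℕ) = k then 1 else 0

/-- Softmax attention weight of (0-indexed) row `j` among rows `0,…,t-1`, with query row `t-1`;
row `i` carries the relative positional encoding `p_{-(t-1-i)}`. -/
noncomputable def attn (W : Matrix (Dim M L U G P) (Dim M L U G P) ℝ)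
    (X : ℕ → Vec M L U G P) (t j : ℕ) : ℝ :=
  Real.exp ((X j + pos (t - 1 - j)) ⬝ᵥ W.mulVec (X (t - 1))) /
    ∑ i ∈ Finset.range t, Real.exp ((X i + pos (t - 1 - i)) ⬝ᵥ W.mulVec (X (t - 1)))

/-- Attention-head output `g_h^t(X)` (attention over the first `t` rows, query at row `t-1`). -/
noncomputable def gHead (W : Matrix (Dim M L U G P) (Dim M L U G P) ℝ)
    (X : ℕ → Vec M L U G P) (t : ℕ) : Vec M L U G P :=
  ∑ j ∈ Finset.range t, attn W X t j • X j

/-- Token at (0-indexed) position `t` of a PT sequence with subject `jstar`: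
block `k` occupies positions `k(S+3),…,k(S+3)+S+1` (subject, `S` middle tokens, separator),
followed (except after the last block) by the attribute `a_{jstar}^{ltype k}`. -/
def ptTok (S : ℕ) (jstar : Fin M) (ltype : ℕ → Fin L)
    (mid : ℕ → ℕ → Tok M L U G) (a : Fin M → Fin L → Fin U) (t : ℕ) : Tok M L U G :=
  let k := t / (S + 3)
  let r := t % (S + 3)
  if r = 0 then Tok.subj jstar
  else if r ≤ S then mid k (r - 1)
  else if r = S + 1 then Tok.sep
  else Tok.attr (ltype k) (a jstar (ltype k))

/-- Token at (0-indexed) position `t` of an ICL sequence with shared attribute type `lstar`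
and subjects `js 0, js 1, …`: the pattern is subject, separator, attribute, subject, … -/
def iclTok (a : Fin M → Fin L → Fin U) (js : ℕ → Fin M) (lstar : Fin L) (t : ℕ) :
    Tok M L U G :=
  if t % 3 = 0 then Tok.subj (js (t / 3))
  else if t % 3 = 1 then Tok.sep
  else Tok.attr lstar (a (js (t / 3)) lstar)


/-- Vanishing first-step gradient for the relation head on ICL sequences. -/
theorem vanishing_first_step_gradient
    (M L U G P N : ℕ) (T : ℕ) (hT : T = 3 * (N + 1) - 1)
    (a : Fin M → Fin L → Fin U) (lstar : Fin L) (js : ℕ → Fin M)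
    (X : ℕ → Vec M L U G P) (hX : ∀ t, X t = E (iclTok a js lstar t))
    (WOVrel : Matrix (Dim M L U G P) (Dim M L U G P) ℝ)
    (hOVrel : WOVrel = ∑ l : Fin L, Matrix.vecMulVec
      (∑ u : Fin U, E (Tok.attr l u)) (E (Tok.rel l)))
    (WKQrel : Matrix (Dim M L U G P) (Dim M L U G P) ℝ)
    (y : Tok M L U G) (fX : Vec M L U G P)
    (π : Tok M L U G → ℝ)
    (hπ : ∀ v, π v = Real.exp (E v ⬝ᵥ fX) /
      ∑ w : Tok M L U G, Real.exp ((E w : Vec M L U G P) ⬝ᵥ fX))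
    (u : Vec M L U G P) (hu : u = (∑ v : Tok M L U G, π v • E v) - E y)
    (r : ℕ → ℝ) (hr : ∀ j, r j = u ⬝ᵥ WOVrel.mulVec (X j))
    (α : ℕ → ℝ) (hα : ∀ j, α j = attn WKQrel X T j)
    (rbar : ℝ) (hrbar : rbar = ∑ i ∈ Finset.range T, α i * r i) :
    (∀ j, r j = 0) ∧
    (∑ j ∈ Finset.range T, (α j * (r j - rbar)) •
      Matrix.vecMulVec (X j + pos (T - 1 - j)) (E Tok.sep : Vec M L U G P))
      = (0 : Matrix (Dim M L U G P) (Dim M L U G P) ℝ) := by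
  have hne : ∀ t l, iclTok a js lstar t ≠ (Tok.rel l : Tok M L U G) := by
    intro t l
    unfold iclTok
    split_ifs <;> simp
  have hdot : ∀ t l, (E (Tok.rel l) : Vec M L U G P) ⬝ᵥ E (iclTok a js lstar t) = 0 := by
    intro t l
    unfold E dotProduct
    rw [Finset.sum_eq_zero]
    intro i _
    by_cases h : i = Sum.inl (Tok.rel l)
    · subst h
      have : (Sum.inl (Tok.rel l) : Dim M L U G P) ≠ Sum.inl (iclTok a js lstar t) := by
        simp [Ne, eq_comm]
        exact hne t l
      simp [this]
    · simp [h]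
  have hMV : ∀ j, WOVrel.mulVec (X j) = 0 := by
    intro j
    rw [hOVrel, hX]
    funext i
    simp only [Matrix.mulVec, dotProduct, Matrix.sum_apply,
      Matrix.vecMulVec_apply, Finset.sum_mul, Pi.zero_apply]
    rw [Finset.sum_comm]
    apply Finset.sum_eq_zero
    intro l _
    have h := hdot j l
    simp only [dotProduct] at h
    calc ∑ x : Dim M L U G P, (∑ u : Fin U, E (Tok.attr l u)) i * E (Tok.rel l) x
          * E (iclTok a js lstar j) x
        = (∑ u : Fin U, E (Tok.attr l u)) i
          * ∑ x : Dim M L U G P, E (Tok.rel l) x * E (iclTok a js lstar j) x := by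
          rw [Finset.mul_sum]; apply Finset.sum_congr rfl; intro x _; ring
      _ = 0 := by rw [h, mul_zero]
  have hr0 : ∀ j, r j = 0 := by
    intro j
    rw [hr, hMV]
    simp [dotProduct]
  refine ⟨hr0, ?_⟩
  have hrbar0 : rbar = 0 := by
    rw [hrbar]; apply Finset.sum_eq_zero; intro i _; rw [hr0]; ring
  apply Finset.sum_eq_zero
  intro j _
  rw [hr0, hrbar0]
  simp


end CR
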